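/- One-dimensional density claim: let λ ∈ [1/2, 1), μ ∈ (0,1), and define families of subintervals of [0,1] by 𝒯₀ = {[0,μ], [1−μ,1]} and 𝒯_{j+1} = {λI₁ + (1−λ)I₂ : I₁, I₂ ∈ 𝒯_j} (Minkowski weighted sums). Then for every α ∈ (0,1) and ℓ = ⌈log((1−α)μ)/log(λ)⌉, every subinterval of [0,1] of length αμ is contained in some interval of 𝒯_ℓ. -/

import Mathlib

open MeasureTheory Set
open scoped ENNReal Pointwise

/-- The families of subintervals of `[0,1]`: `𝒯₀ = {[0,μ], [1-μ,1]}` and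
`𝒯_{j+1}` consists of Minkowski weighted sums `λI₁ + (1-λ)I₂` of members of `𝒯_j`. -/
def intervalFamily (lam mu : ℝ) : ℕ → Set (Set ℝ)
  | 0 => {Set.Icc 0 mu, Set.Icc (1 - mu) 1}
  | (j + 1) => {I | ∃ I1 ∈ intervalFamily lam mu j, ∃ I2 ∈ intervalFamily lam mu j,
      I = lam • I1 + (1 - lam) • I2}

/-!
The interval `[(1-μ)t, (1-μ)t + μ]` belongs to `𝒯_j` whenever `t` is obtained from `{0, 1}` by
`j` rounds of `λ`-weighted means. Since `λ ≥ 1/2`, the two maps `x ↦ λx` and `x ↦ λx + 1 - λ`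
cover `[0,1]`, so these points form a `λ^j`-net of `[0,1]` from the left. For `j = ℓ` we have
`λ^ℓ ≤ (1-α)μ`, and this gap is absorbed by the slack `μ - αμ` between the interval lengths.
-/

def iteratedMeans (lam : ℝ) : ℕ → Set ℝ
  | 0 => {0, 1}
  | (j + 1) => {x | ∃ s ∈ iteratedMeans lam j, ∃ u ∈ iteratedMeans lam j,
      x = lam * s + (1 - lam) * u}

lemma zero_mem_iteratedMeans (lam : ℝ) : ∀ j, (0 : ℝ) ∈ iteratedMeans lam j
  | 0 => Or.inl rfl
  | (j + 1) => ⟨0, zero_mem_iteratedMeans lam j, 0, zero_mem_iteratedMeans lam j, by ring⟩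

lemma one_mem_iteratedMeans (lam : ℝ) : ∀ j, (1 : ℝ) ∈ iteratedMeans lam j
  | 0 => Or.inr rfl
  | (j + 1) => ⟨1, one_mem_iteratedMeans lam j, 1, one_mem_iteratedMeans lam j, by ring⟩

lemma exists_mem_iteratedMeans_le_le_add_pow {lam : ℝ} (hlam : 1 / 2 ≤ lam) (j : ℕ) {x : ℝ}
    (hx : x ∈ Icc (0 : ℝ) 1) : ∃ t ∈ iteratedMeans lam j, t ≤ x ∧ x ≤ t + lam ^ j := by
  induction j generalizing x with
  | zero => exact ⟨0, zero_mem_iteratedMeans lam 0, hx.1, by simpa using hx.2⟩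
  | succ j ih =>
    have hlam0 : 0 < lam := by linarith
    -- `x = λy + (1-λ)u` with `u ∈ {0,1}` and `y ∈ [0,1]`
    obtain ⟨u, hu, hy⟩ : ∃ u ∈ iteratedMeans lam j, (x - (1 - lam) * u) / lam ∈ Icc (0 : ℝ) 1 := by
      rcases le_total x lam with hxlam | hxlam
      · refine ⟨0, zero_mem_iteratedMeans lam j, ?_⟩
        simp only [mul_zero, sub_zero, mem_Icc]
        exact ⟨div_nonneg hx.1 hlam0.le, (div_le_one hlam0).2 hxlam⟩
      · refine ⟨1, one_mem_iteratedMeans lam j, ?_⟩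
        simp only [mul_one, mem_Icc]
        exact ⟨div_nonneg (by linarith) hlam0.le, (div_le_one hlam0).2 (by linarith [hx.2])⟩
    obtain ⟨s, hs, hsy, hys⟩ := ih hy
    have hx_eq : x = lam * ((x - (1 - lam) * u) / lam) + (1 - lam) * u := by
      field_simp; ring
    refine ⟨lam * s + (1 - lam) * u, ⟨s, hs, u, hu, rfl⟩, ?_, ?_⟩
    · rw [hx_eq]; gcongr
    · rw [hx_eq, pow_succ']; nlinarith

lemma Icc_mem_intervalFamily {lam mu : ℝ} (hlam0 : 0 < lam) (hlam1 : lam < 1) (hmu : 0 ≤ mu)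
    (j : ℕ) {t : ℝ} (ht : t ∈ iteratedMeans lam j) :
    Icc ((1 - mu) * t) ((1 - mu) * t + mu) ∈ intervalFamily lam mu j := by
  induction j generalizing t with
  | zero =>
    rcases ht with rfl | rfl
    · left; simp
    · right; simp
  | succ j ih =>
    obtain ⟨s, hs, u, hu, rfl⟩ := ht
    refine ⟨_, ih hs, _, ih hu, ?_⟩
    rw [LinearOrderedField.smul_Icc hlam0, LinearOrderedField.smul_Icc (sub_pos.2 hlam1),
      Set.Icc_add_Icc (by nlinarith) (by nlinarith)]
    congr 1 <;> ring

lemma exists_mem_intervalFamily_Icc_subset {lam mu : ℝ} (hlam : lam ∈ Ico (1 / 2 : ℝ) 1)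
    (hmu : 0 ≤ mu) (j : ℕ) {a b : ℝ} (ha : 0 ≤ a) (hb : b ≤ 1) (hab : b - a ≤ mu - lam ^ j) :
    ∃ I ∈ intervalFamily lam mu j, Icc a b ⊆ I := by
  have hlam0 : 0 < lam := by linarith [hlam.1]
  rcases lt_or_ge a (1 - mu) with hamu | hamu
  · have hmu1 : 0 < 1 - mu := by linarith
    obtain ⟨t, ht, hta, hat⟩ := exists_mem_iteratedMeans_le_le_add_pow hlam.1 j
      (x := a / (1 - mu)) ⟨div_nonneg ha hmu1.le, (div_le_one hmu1).2 hamu.le⟩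
    refine ⟨_, Icc_mem_intervalFamily hlam0 hlam.2 hmu j ht, Icc_subset_Icc ?_ ?_⟩
    · rwa [le_div_iff₀' hmu1] at hta
    · rw [div_le_iff₀' hmu1] at hat
      nlinarith [pow_pos hlam0 j]
  · exact ⟨_, Icc_mem_intervalFamily hlam0 hlam.2 hmu j (one_mem_iteratedMeans lam j),
      Icc_subset_Icc (by linarith) (by linarith)⟩

lemma pow_le_of_natCast_eq_ceil_log_div_log {lam y : ℝ} (hlam0 : 0 < lam) (hlam1 : lam < 1)
    (hy : 0 < y) {ℓ : ℕ} (hℓ : (ℓ : ℤ) = ⌈Real.log y / Real.log lam⌉) : lam ^ ℓ ≤ y := by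
  have hlog : Real.log lam < 0 := Real.log_neg hlam0 hlam1
  have hceil : Real.log y / Real.log lam ≤ ℓ := by
    exact_mod_cast hℓ ▸ Int.le_ceil (Real.log y / Real.log lam)
  rw [Real.pow_le_iff_le_log hlam0 hy]
  exact (div_le_iff_of_neg hlog).1 hceil

/-- One-dimensional density claim: for `λ ∈ [1/2,1)`, `μ ∈ (0,1)`, `α ∈ (0,1)` and
`ℓ = ⌈log((1-α)μ)/log(λ)⌉`, every subinterval of `[0,1]` of length `αμ` is contained
in some interval of `𝒯_ℓ`. -/
theorem stmt7 (lam mu : ℝ) (hlam : lam ∈ Set.Ico (1/2 : ℝ) 1)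
    (hmu : mu ∈ Set.Ioo (0:ℝ) 1) (α : ℝ) (hα : α ∈ Set.Ioo (0:ℝ) 1)
    (ℓ : ℕ) (hℓ : (ℓ : ℤ) = ⌈Real.log ((1 - α) * mu) / Real.log lam⌉)
    (a : ℝ) (ha : 0 ≤ a) (ha' : a + α * mu ≤ 1) :
    ∃ I ∈ intervalFamily lam mu ℓ, Set.Icc a (a + α * mu) ⊆ I := by
  have hpow : lam ^ ℓ ≤ (1 - α) * mu :=
    pow_le_of_natCast_eq_ceil_log_div_log (by linarith [hlam.1]) hlam.2
      (mul_pos (sub_pos.2 hα.2) hmu.1) hℓ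
  exact exists_mem_intervalFamily_Icc_subset hlam hmu.1.le ℓ ha ha' (by linarith)
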